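/- arXiv:2010.11450 — 2 statements merged into one kernel-verified Lean document; each statement's English description precedes it below -/
import Mathlib

section
/- Let δ > 0 and d ≥ 1. The value (1/δ) · P_π^{-1} · SM_{(k_x, d)} · P_π · x + P_π^{-1} · u^{(k_x)} is independent of the choice of permutation π sorting x in decreasing order; hence PLSoftMax^δ is a well-defined function ℝ^d → Δ_{d−1}, and moreover it is continuous on ℝ^d. -/
open Finset
open scoped Classical

/-- The soft-max matrix `SM_{(k,d)}` (1-indexed description): `m_{11} = (k−1)/k`;
`m_{ii} = 1/i` for `2 ≤ i ≤ k`; `m_{i1} = −1/k` for `2 ≤ i ≤ k`;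
`m_{ij} = −1/(j(j−1))` for `1 ≤ i < j ≤ k`, `j ≥ 2`; all other entries `0`. -/
noncomputable def SM (k d : ℕ) : Matrix (Fin d) (Fin d) ℝ :=
  Matrix.of fun i j =>
    if k < (i : ℕ) + 1 ∨ k < (j : ℕ) + 1 then 0
    else if (i : ℕ) + 1 = 1 ∧ (j : ℕ) + 1 = 1 then ((k : ℝ) - 1) / k
    else if (i : ℕ) = (j : ℕ) then 1 / ((i : ℕ) + 1 : ℝ)
    else if (j : ℕ) + 1 = 1 then -1 / (k : ℝ)
    else if (i : ℕ) < (j : ℕ) then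
      -1 / ((((j : ℕ) + 1 : ℕ) : ℝ) * (((j : ℕ) + 1 : ℝ) - 1))
    else 0

/-- The vector `u^{(k)} ∈ ℝ^d`, `u^{(k)}_i = 1/k` for the first `k` coordinates, else `0`. -/
noncomputable def uvec (k d : ℕ) : Fin d → ℝ :=
  fun i => if (i : ℕ) + 1 ≤ k then 1 / (k : ℝ) else 0

/-- The permutation matrix `P_π`, with `1`'s at entries `(i, π(i))`. -/
def permMat (d : ℕ) (π : Equiv.Perm (Fin d)) : Matrix (Fin d) (Fin d) ℝ :=
  Matrix.of fun i j => if j = π i then 1 else 0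

/-- `π` is a sorting permutation for `x`, i.e. `x_{π(1)} ≥ x_{π(2)} ≥ ⋯ ≥ x_{π(d)}`. -/
def Sorts {d : ℕ} (x : Fin d → ℝ) (π : Equiv.Perm (Fin d)) : Prop :=
  ∀ i j : Fin d, i ≤ j → x (π j) ≤ x (π i)

/-- `k_x`: the largest `k ∈ {1,…,d}` with `x_{π(1)} − x_{π(k)} ≤ δ`. -/
noncomputable def kx {d : ℕ} (δ : ℝ) (x : Fin d → ℝ) (π : Equiv.Perm (Fin d)) : ℕ :=
  sSup {k : ℕ | 1 ≤ k ∧ k ≤ d ∧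
    ∃ h0 : 0 < d, ∃ h : k - 1 < d, x (π ⟨0, h0⟩) - x (π ⟨k - 1, h⟩) ≤ δ}

/-- `PLSoftMax^δ(x) = (1/δ)·P_π⁻¹·SM_{(k_x,d)}·P_π·x + P_π⁻¹·u^{(k_x)}`,
computed using the sorting permutation `π` of `x`. -/
noncomputable def PLSoftMax {d : ℕ} (δ : ℝ) (x : Fin d → ℝ)
    (π : Equiv.Perm (Fin d)) : Fin d → ℝ :=
  (1 / δ) • ((permMat d π⁻¹).mulVec
      ((SM (kx δ x π) d).mulVec ((permMat d π).mulVec x)))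
    + (permMat d π⁻¹).mulVec (uvec (kx δ x π) d)

/-!
With `d = n + 1`, write `y = x ∘ π` for the sorted coordinates and let
`z j = max (y j) (y 0 - δ)` for `j ≤ n` and `z (n + 1) = y 0 - δ` (`clampSeq`). Summation by parts
turns the rows of `SM_{(k_x, d)}` into
`PLSoftMax δ x π (π r) = δ⁻¹ ∑_{r ≤ j ≤ n} (z j - z (j + 1)) / (j + 1)`; the cut-off `k_x`
disappears because `z` is constant from index `k_x` on. As `z` is antitone, this is
`δ⁻¹ ∑_j (min c (z j) - min c (z (j + 1))) / (j + 1)` with `c = z r = max (x (π r)) (max x - δ)`,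
an expression in `x (π r)` and the order statistics of `x` only: it does not depend on `π`, and it
is continuous since order statistics are max-min expressions. Non-negativity is the antitonicity
of `z`, and the double sum over `r` telescopes to `(z 0 - z (n + 1)) / δ = 1`.
-/

open scoped Matrix

section Telescoping

variable {𝕜 : Type*} [Field 𝕜]

theorem sum_Ico_sub_div_succ [CharZero 𝕜] (z : ℕ → 𝕜) {r K : ℕ} (h : r < K) :
    ∑ j ∈ Ico r K, (z j - z (j + 1)) / ((j : 𝕜) + 1)
      = z r / ((r : 𝕜) + 1) - z K / K - ∑ j ∈ Ioo r K, z j / (((j : 𝕜) + 1) * j) := by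
  induction K, h using Nat.le_induction with
  | base => simp [Ioo_add_one_right_eq_Ioc, sub_div]
  | succ K hK ih =>
    rw [sum_Ico_succ_top (by omega), ih, Ioo_add_one_right_eq_Ioc, ← Ioo_insert_right hK,
      sum_insert (by simp)]
    have : (K : 𝕜) ≠ 0 := Nat.cast_ne_zero.2 (by omega)
    push_cast
    field_simp
    ring

theorem sum_range_min_sub_min_of_antitone [LinearOrder 𝕜] {z : ℕ → 𝕜} (hz : Antitone z)
    (m r : ℕ) :
    ∑ j ∈ range m, (min (z r) (z j) - min (z r) (z (j + 1))) / ((j : 𝕜) + 1)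
      = ∑ j ∈ Ico r m, (z j - z (j + 1)) / ((j : 𝕜) + 1) := by
  have hmin : ∀ j, min (z r) (z j) = z (max r j) := fun j => hz.map_max.symm
  calc _ = ∑ j ∈ range m, if r ≤ j then (z j - z (j + 1)) / ((j : 𝕜) + 1) else 0 := by
        refine sum_congr rfl fun j _ => ?_
        simp only [hmin]
        split_ifs with hrj
        · rw [max_eq_right hrj, max_eq_right (by omega)]
        · rw [max_eq_left (by omega), max_eq_left (by omega), sub_self, zero_div]
    _ = _ := by
        rw [← sum_filter]
        congr 1
        ext j
        simp only [mem_filter, mem_range, mem_Ico]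
        omega

theorem sum_range_sum_Ico_sub_div_succ [CharZero 𝕜] (z : ℕ → 𝕜) (m : ℕ) :
    ∑ r ∈ range m, ∑ j ∈ Ico r m, (z j - z (j + 1)) / ((j : 𝕜) + 1) = z 0 - z m := by
  induction m with
  | zero => simp
  | succ m ih =>
    have hsplit : ∀ r ∈ range m, ∑ j ∈ Ico r (m + 1), (z j - z (j + 1)) / ((j : 𝕜) + 1)
        = ∑ j ∈ Ico r m, (z j - z (j + 1)) / ((j : 𝕜) + 1) + (z m - z (m + 1)) / ((m : 𝕜) + 1) :=
      fun r hr => sum_Ico_succ_top (by simp at hr; omega) _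
    rw [sum_range_succ, sum_congr rfl hsplit, sum_add_distrib, ih]
    simp
    field_simp
    ring

end Telescoping

theorem permMat_mulVec {d : ℕ} (σ : Equiv.Perm (Fin d)) (v : Fin d → ℝ) :
    permMat d σ *ᵥ v = v ∘ σ := by
  ext i
  simp [permMat, Matrix.mulVec, dotProduct]

theorem Sorts.antitone {d : ℕ} {x : Fin d → ℝ} {π : Equiv.Perm (Fin d)} (hs : Sorts x π) :
    Antitone (x ∘ π) :=
  hs

noncomputable def ordStat {n : ℕ} (x : Fin n → ℝ) (j : Fin n) : ℝ :=
  univ.sup' ⟨Fin.castLEEmb j.2, mem_univ _⟩ fun f : Fin (j + 1) ↪ Fin n =>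
    univ.inf' univ_nonempty (x ∘ f)

theorem continuous_ordStat {n : ℕ} (j : Fin n) : Continuous fun x : Fin n → ℝ => ordStat x j :=
  Continuous.finset_sup'_apply _ fun _ _ =>
    Continuous.finset_inf'_apply _ fun _ _ => continuous_apply _

theorem ordStat_eq_of_sorts {n : ℕ} {x : Fin n → ℝ} {π : Equiv.Perm (Fin n)} (hs : Sorts x π) :
    ordStat x = x ∘ π := by
  ext j
  apply le_antisymm
  · refine sup'_le _ _ fun f _ => ?_
    obtain ⟨k, hk⟩ : ∃ k, j ≤ π.symm (f k) := by
      by_contra! h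
      have := Fintype.card_le_of_injective (fun k => (⟨π.symm (f k), h k⟩ : Fin j))
        fun a b hab => f.injective (π.symm.injective (Fin.ext (Fin.mk.inj hab)))
      simp at this
    calc univ.inf' univ_nonempty (x ∘ f) ≤ x (f k) := inf'_le _ (mem_univ k)
      _ = x (π (π.symm (f k))) := by rw [Equiv.apply_symm_apply]
      _ ≤ x (π j) := hs _ _ hk
  · refine le_sup'_of_le _ (mem_univ ((Fin.castLEEmb j.2).trans π.toEmbedding)) ?_
    exact le_inf' _ _ fun k _ => hs _ _ (Fin.le_iff_val_le_val.2 (Nat.lt_succ_iff.1 k.2))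

theorem kx_le {d : ℕ} (δ : ℝ) (x : Fin d → ℝ) (π : Equiv.Perm (Fin d)) : kx δ x π ≤ d :=
  csSup_le' fun _ hk => hk.2.1

theorem lt_kx_iff {n : ℕ} {δ : ℝ} (hδ : 0 ≤ δ) {x : Fin (n + 1) → ℝ}
    {π : Equiv.Perm (Fin (n + 1))} (hs : Sorts x π) (j : Fin (n + 1)) :
    (j : ℕ) < kx δ x π ↔ x (π 0) - δ ≤ x (π j) := by
  set S : Set ℕ := {k | 1 ≤ k ∧ k ≤ n + 1 ∧ ∃ h0 : 0 < n + 1, ∃ h : k - 1 < n + 1,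
      x (π ⟨0, h0⟩) - x (π ⟨k - 1, h⟩) ≤ δ}
  have hbdd : BddAbove S := ⟨n + 1, fun _ hk => hk.2.1⟩
  constructor
  · intro hj
    change (j : ℕ) < sSup S at hj
    have hne : S.Nonempty := ⟨1, le_rfl, by omega, by omega, by omega, by simpa using hδ⟩
    obtain ⟨-, -, _, hK, hclose⟩ := Nat.sSup_mem hne hbdd
    have := hs j ⟨sSup S - 1, hK⟩ (Fin.le_iff_val_le_val.2 (by simp only; omega))
    simp only [Fin.mk_zero] at hclose
    linarith
  · intro hj
    have : (j : ℕ) + 1 ≤ kx δ x π :=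
      le_csSup hbdd ⟨by omega, j.2, by omega, by omega, by simp; linarith⟩
    omega

theorem SM_apply_of_lt {K d : ℕ} {r : Fin d} (hr : (r : ℕ) < K) (j : Fin d) :
    SM K d r j = (if j = r then 1 / ((r : ℝ) + 1) else 0)
      - (if j = ⟨0, r.pos⟩ then 1 / (K : ℝ) else 0)
      - (if (r : ℕ) < j ∧ (j : ℕ) < K then 1 / (((j : ℝ) + 1) * j) else 0) := by
  have hK : (K : ℝ) ≠ 0 := Nat.cast_ne_zero.2 (by omega)
  simp only [SM, Matrix.of_apply, Fin.ext_iff]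
  split_ifs <;> first
    | omega
    | ring1
    | (simp; done)
    | (have hr0 : (r : ℕ) = 0 := by omega
       simp [hr0]; field_simp)
    | (have hj0 : (j : ℝ) ≠ 0 := Nat.cast_ne_zero.2 (by omega)
       push_cast; rw [add_sub_cancel_right]; field_simp; ring)

theorem SM_mulVec_apply_of_le {K d : ℕ} {r : Fin d} (hr : K ≤ r) (y : Fin d → ℝ) :
    (SM K d *ᵥ y) r = 0 := by
  simp [Matrix.mulVec, dotProduct, SM, hr]

theorem SM_mulVec_apply_of_lt {n K : ℕ} (hK : K ≤ n + 1) {r : Fin (n + 1)} (hr : (r : ℕ) < K)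
    (y : Fin (n + 1) → ℝ) (z : ℕ → ℝ) (hz : ∀ j : Fin (n + 1), (j : ℕ) < K → z j = y j) :
    (SM K (n + 1) *ᵥ y) r
      = z r / ((r : ℝ) + 1) - z 0 / K - ∑ j ∈ Ioo (r : ℕ) K, z j / (((j : ℝ) + 1) * j) := by
  set f : ℕ → ℝ := fun j => if (r : ℕ) < j ∧ j < K then z j / (((j : ℝ) + 1) * j) else 0
  have hIoo : ∑ j : Fin (n + 1),
      (if (r : ℕ) < j ∧ (j : ℕ) < K then 1 / (((j : ℝ) + 1) * j) * y j else 0)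
        = ∑ j ∈ Ioo (r : ℕ) K, z j / (((j : ℝ) + 1) * j) := by
    calc _ = ∑ j : Fin (n + 1), f j := sum_congr rfl fun j _ => by
            simp only [f]
            split_ifs with h
            · rw [hz j h.2, one_div_mul_eq_div]
            · rfl
      _ = ∑ j ∈ range (n + 1), f j := Fin.sum_univ_eq_sum_range f _
      _ = _ := by
        rw [← sum_filter]
        congr 1
        ext j
        simp only [mem_filter, mem_range, mem_Ioo]
        omega
  simp only [Matrix.mulVec, dotProduct, SM_apply_of_lt hr, sub_mul, ite_mul, zero_mul,
    sum_sub_distrib, sum_ite_eq', mem_univ, if_true, hIoo]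
  rw [hz r hr, ← hz ⟨0, by omega⟩ (by simp only; omega), one_div_mul_eq_div, one_div_mul_eq_div]

noncomputable def clampSeq {n : ℕ} (δ : ℝ) (y : Fin (n + 1) → ℝ) (j : ℕ) : ℝ :=
  if h : j < n + 1 then max (y ⟨j, h⟩) (y 0 - δ) else y 0 - δ

theorem antitone_clampSeq {n : ℕ} {δ : ℝ} {y : Fin (n + 1) → ℝ} (hy : Antitone y) :
    Antitone (clampSeq δ y) := by
  intro j k hjk
  simp only [clampSeq]
  split_ifs with hk hj hj
  · exact max_le_max (hy (Fin.mk_le_mk.2 hjk)) le_rfl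
  · omega
  · exact le_max_right _ _
  · exact le_rfl

theorem continuous_clampSeq_ordStat {n : ℕ} (δ : ℝ) (j : ℕ) :
    Continuous fun x : Fin (n + 1) → ℝ => clampSeq δ (ordStat x) j := by
  unfold clampSeq
  split_ifs
  · exact (continuous_ordStat _).max ((continuous_ordStat 0).sub continuous_const)
  · exact (continuous_ordStat 0).sub continuous_const

theorem PLSoftMax_apply_perm {d : ℕ} (δ : ℝ) (x : Fin d → ℝ) (π : Equiv.Perm (Fin d)) (r : Fin d) :
    PLSoftMax δ x π (π r)
      = 1 / δ * (SM (kx δ x π) d *ᵥ (x ∘ π)) r + uvec (kx δ x π) d r := by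
  simp only [PLSoftMax, Pi.add_apply, Pi.smul_apply, smul_eq_mul, permMat_mulVec,
    Function.comp_apply, Equiv.Perm.inv_def, Equiv.symm_apply_apply]

section Sorted

variable {n : ℕ} {δ : ℝ} {x : Fin (n + 1) → ℝ} {π : Equiv.Perm (Fin (n + 1))}

theorem clampSeq_of_lt_kx (hδ : 0 ≤ δ) (hs : Sorts x π) {j : Fin (n + 1)}
    (hj : (j : ℕ) < kx δ x π) : clampSeq δ (x ∘ π) j = x (π j) := by
  simp [clampSeq, j.isLt, (lt_kx_iff hδ hs j).1 hj]

theorem clampSeq_of_kx_le (hδ : 0 ≤ δ) (hs : Sorts x π) {j : ℕ} (hj : kx δ x π ≤ j) :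
    clampSeq δ (x ∘ π) j = x (π 0) - δ := by
  unfold clampSeq
  split_ifs with h
  · exact max_eq_right (not_le.1 (mt (lt_kx_iff hδ hs ⟨j, h⟩).2 (by simpa using hj))).le
  · rfl

theorem PLSoftMax_apply_perm_eq_sum (hδ : 0 < δ) (hs : Sorts x π) (r : Fin (n + 1)) :
    PLSoftMax δ x π (π r) = 1 / δ * ∑ j ∈ Ico (r : ℕ) (n + 1),
      (clampSeq δ (x ∘ π) j - clampSeq δ (x ∘ π) (j + 1)) / ((j : ℝ) + 1) := by
  set K := kx δ x π
  have hKn : K ≤ n + 1 := kx_le δ x π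
  have htail : ∀ m, K ≤ m → ∑ j ∈ Ico m (n + 1),
      (clampSeq δ (x ∘ π) j - clampSeq δ (x ∘ π) (j + 1)) / ((j : ℝ) + 1) = 0 :=
    fun m hm => sum_eq_zero fun j hj => by
      rw [clampSeq_of_kx_le hδ.le hs (hm.trans (mem_Ico.1 hj).1),
        clampSeq_of_kx_le hδ.le hs (by have := (mem_Ico.1 hj).1; omega), sub_self, zero_div]
  rw [PLSoftMax_apply_perm]
  rcases lt_or_ge (r : ℕ) K with hr | hr
  · have hz0 : clampSeq δ (x ∘ π) 0 = x (π 0) :=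
      clampSeq_of_lt_kx hδ.le hs (j := 0) (by simp; omega)
    rw [← sum_Ico_consecutive _ hr.le hKn, htail K le_rfl, add_zero, sum_Ico_sub_div_succ _ hr,
      SM_mulVec_apply_of_lt hKn hr (x ∘ π) _ fun j hj => clampSeq_of_lt_kx hδ.le hs hj,
      clampSeq_of_kx_le hδ.le hs le_rfl, hz0, uvec, if_pos (by omega)]
    field_simp
    ring
  · rw [SM_mulVec_apply_of_le hr, htail r hr, uvec, if_neg (by omega)]
    simp

theorem PLSoftMax_nonneg (hδ : 0 < δ) (hs : Sorts x π) (i : Fin (n + 1)) :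
    0 ≤ PLSoftMax δ x π i := by
  obtain ⟨r, rfl⟩ := π.surjective i
  rw [PLSoftMax_apply_perm_eq_sum hδ hs]
  exact mul_nonneg (by positivity) (sum_nonneg fun j _ =>
    div_nonneg (sub_nonneg.2 (antitone_clampSeq hs.antitone j.le_succ)) (by positivity))

theorem sum_PLSoftMax (hδ : 0 < δ) (hs : Sorts x π) : ∑ i, PLSoftMax δ x π i = 1 := by
  rw [← Equiv.sum_comp π]
  simp only [PLSoftMax_apply_perm_eq_sum hδ hs, ← mul_sum]
  rw [Fin.sum_univ_eq_sum_range (fun r => ∑ j ∈ Ico r (n + 1),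
      (clampSeq δ (x ∘ π) j - clampSeq δ (x ∘ π) (j + 1)) / ((j : ℝ) + 1)),
    sum_range_sum_Ico_sub_div_succ]
  simp [clampSeq, hδ.le]
  field_simp

end Sorted

noncomputable def plsoftmaxClosedForm {n : ℕ} (δ : ℝ) (x : Fin (n + 1) → ℝ) (i : Fin (n + 1)) :
    ℝ :=
  1 / δ * ∑ j ∈ range (n + 1),
    (min (max (x i) (ordStat x 0 - δ)) (clampSeq δ (ordStat x) j)
      - min (max (x i) (ordStat x 0 - δ)) (clampSeq δ (ordStat x) (j + 1))) / ((j : ℝ) + 1)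

theorem continuous_plsoftmaxClosedForm (n : ℕ) (δ : ℝ) :
    Continuous (plsoftmaxClosedForm (n := n) δ) := by
  have hc : ∀ i : Fin (n + 1),
      Continuous fun x : Fin (n + 1) → ℝ => max (x i) (ordStat x 0 - δ) :=
    fun i => (continuous_apply i).max ((continuous_ordStat 0).sub continuous_const)
  exact continuous_pi fun i => continuous_const.mul <| continuous_finsetSum _ fun j _ =>
    (((hc i).min (continuous_clampSeq_ordStat δ j)).sub
      ((hc i).min (continuous_clampSeq_ordStat δ (j + 1)))).div_const _

theorem PLSoftMax_eq_closedForm {n : ℕ} {δ : ℝ} (hδ : 0 < δ) {x : Fin (n + 1) → ℝ}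
    {π : Equiv.Perm (Fin (n + 1))} (hs : Sorts x π) :
    PLSoftMax δ x π = plsoftmaxClosedForm δ x := by
  funext i
  obtain ⟨r, rfl⟩ := π.surjective i
  have hc : max (x (π r)) (ordStat x 0 - δ) = clampSeq δ (x ∘ π) r := by
    simp [clampSeq, r.isLt, ordStat_eq_of_sorts hs]
  rw [PLSoftMax_apply_perm_eq_sum hδ hs, plsoftmaxClosedForm, hc, ordStat_eq_of_sorts hs,
    sum_range_min_sub_min_of_antitone (antitone_clampSeq hs.antitone)]

/-- The value of `PLSoftMax^δ(x)` does not depend on the choice of sorting permutation;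
hence `PLSoftMax^δ` is a well-defined function `ℝ^d → Δ_{d−1}`, and it is continuous. -/
theorem plsoftmax_well_defined_continuous (d : ℕ) (hd : 1 ≤ d) (δ : ℝ) (hδ : 0 < δ) :
    (∀ (x : Fin d → ℝ) (π π' : Equiv.Perm (Fin d)),
        Sorts x π → Sorts x π' → PLSoftMax δ x π = PLSoftMax δ x π') ∧
    (∀ g : (Fin d → ℝ) → Fin d → ℝ,
        (∀ x, ∃ π : Equiv.Perm (Fin d), Sorts x π ∧ g x = PLSoftMax δ x π) →
        Continuous g ∧ ∀ x, (∀ i, 0 ≤ g x i) ∧ ∑ i, g x i = 1) := by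
  obtain ⟨n, rfl⟩ : ∃ n, d = n + 1 := ⟨d - 1, by omega⟩
  refine ⟨fun x π π' hs hs' => by
    rw [PLSoftMax_eq_closedForm hδ hs, PLSoftMax_eq_closedForm hδ hs'], fun g hg => ?_⟩
  have hg_eq : g = plsoftmaxClosedForm δ := funext fun x => by
    obtain ⟨π, hs, hgx⟩ := hg x
    rw [hgx, PLSoftMax_eq_closedForm hδ hs]
  refine ⟨hg_eq ▸ continuous_plsoftmaxClosedForm n δ, fun x => ?_⟩
  obtain ⟨π, hs, hgx⟩ := hg x
  rw [hgx]
  exact ⟨PLSoftMax_nonneg hδ hs, sum_PLSoftMax hδ hs⟩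
end

section
/- For any d ∈ ℕ, any k ∈ {1, …, d}, and any p, q ≥ 1 (possibly +∞), the (p, q)-subordinate norm of the soft-max matrix satisfies ‖SM_{(k,d)}‖_{p,q} ≤ 2 · min{p + 1, q/(q − 1), 1 + log k}, where q/(q−1) is interpreted as +∞ when q = 1, p + 1 is interpreted as +∞ when p = ∞, and log denotes the natural logarithm. -/
open Finset
open scoped ENNReal

/-- The `ℓ_p` norm for an extended exponent `p ∈ [1, ∞]`. -/
noncomputable def pnormE {d : ℕ} (p : ℝ≥0∞) (z : Fin d → ℝ) : ℝ :=
  if p = ∞ then ⨆ i, |z i| else (∑ i, |z i| ^ p.toReal) ^ (1 / p.toReal)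

/-- `q/(q−1)`, interpreted as `+∞` when `q = 1` and as `1` when `q = ∞`. -/
noncomputable def qConj (q : ℝ≥0∞) : ℝ≥0∞ :=
  if q = ∞ then 1 else q / (q - 1)

/-- The `(p, q)`-subordinate norm `‖A‖_{p,q} = sup_{x ≠ 0} ‖Ax‖_q / ‖x‖_p` for
extended exponents. -/
noncomputable def subNormE {d : ℕ} (p q : ℝ≥0∞) (A : Matrix (Fin d) (Fin d) ℝ) : ℝ :=
  sSup {r : ℝ | ∃ x : Fin d → ℝ, x ≠ 0 ∧ r = pnormE q (A.mulVec x) / pnormE p x}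

/-!
Indexed from `0`, `SM` is non-positive off the diagonal and all its rows and columns sum to zero:
column `j ≥ 1` is `unifPrefix (j + 1) - unifPrefix j` and column `0` is
`unifPrefix 1 - unifPrefix k`, where `unifPrefix n` is the uniform probability vector on
`{0, …, n-1}`. Hence row `i` and column `i` both have absolute sum `2 m_ii ≤ 2/(i+1)`.
Consequently `|(SM x)_i| ≤ 2/(i+1) ‖x‖_∞`, which gives the bound `2 q/(q-1)` through
`∑ n^{-q} ≤ q/(q-1)` (comparison with `∫_1^∞ t^{-q} dt`), and the bound `2 (1 + log k)` through
`‖·‖_q ≤ ‖·‖_1` and `∑_{i<k} 1/(i+1) ≤ 1 + log k`; while `‖SM x‖_1 ≤ ∑_j 2/(j+1) |x_j|` gives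
`2 p` by Hölder's inequality and the same bound on `∑ n^{-r}` for the exponent `r` conjugate to `p`.
-/

open Matrix

section pnormE

variable {d : ℕ}

theorem pnormE_eq_norm {p : ℝ≥0∞} (hp : 1 ≤ p) (z : Fin d → ℝ) :
    pnormE p z = ‖WithLp.toLp p z‖ := by
  unfold pnormE
  split_ifs with h
  · subst h
    simp [PiLp.norm_eq_ciSup, Real.norm_eq_abs]
  · rw [PiLp.norm_eq_sum (ENNReal.toReal_pos (by positivity) h)]
    simp [Real.norm_eq_abs]

theorem pnormE_nonneg {p : ℝ≥0∞} (hp : 1 ≤ p) (z : Fin d → ℝ) : 0 ≤ pnormE p z := by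
  have : Fact (1 ≤ p) := ⟨hp⟩
  rw [pnormE_eq_norm hp]
  exact norm_nonneg _

theorem abs_le_pnormE {p : ℝ≥0∞} (hp : 1 ≤ p) (z : Fin d → ℝ) (i : Fin d) :
    |z i| ≤ pnormE p z := by
  have : Fact (1 ≤ p) := ⟨hp⟩
  rw [pnormE_eq_norm hp, ← Real.norm_eq_abs]
  exact PiLp.norm_apply_le (WithLp.toLp p z) i

theorem pnormE_pos {p : ℝ≥0∞} (hp : 1 ≤ p) {z : Fin d → ℝ} (hz : z ≠ 0) :
    0 < pnormE p z := by
  obtain ⟨i, hi⟩ := Function.ne_iff.mp hz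
  exact (abs_pos.mpr hi).trans_le (abs_le_pnormE hp z i)

theorem pnormE_le_sum_abs {q : ℝ≥0∞} (hq : 1 ≤ q) (z : Fin d → ℝ) :
    pnormE q z ≤ ∑ i, |z i| := by
  have : Fact (1 ≤ q) := ⟨hq⟩
  rw [pnormE_eq_norm hq]
  calc ‖WithLp.toLp q z‖ = ‖∑ i, WithLp.toLp q (Pi.single i (z i) : Fin d → ℝ)‖ := by
        rw [← WithLp.toLp_sum, Finset.univ_sum_single]
    _ ≤ ∑ i, ‖WithLp.toLp q (Pi.single i (z i) : Fin d → ℝ)‖ := norm_sum_le _ _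
    _ = ∑ i, |z i| := by simp [Real.norm_eq_abs]

theorem pnormE_smul {q : ℝ≥0∞} (hq : 1 ≤ q) (c : ℝ) (z : Fin d → ℝ) :
    pnormE q (c • z) = |c| * pnormE q z := by
  have : Fact (1 ≤ q) := ⟨hq⟩
  rw [pnormE_eq_norm hq, pnormE_eq_norm hq, WithLp.toLp_smul, norm_smul, Real.norm_eq_abs]

theorem pnormE_mono {q : ℝ≥0∞} {u v : Fin d → ℝ} (h : ∀ i, |u i| ≤ |v i|) :
    pnormE q u ≤ pnormE q v := by
  unfold pnormE
  split_ifs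
  · exact ciSup_mono (Set.finite_range _).bddAbove h
  · refine Real.rpow_le_rpow (by positivity) (Finset.sum_le_sum fun i _ => ?_) (by positivity)
    exact Real.rpow_le_rpow (abs_nonneg _) (h i) ENNReal.toReal_nonneg

end pnormE

theorem sum_abs_eq_two_mul_of_sum_eq_zero {ι : Type*} [Fintype ι] [DecidableEq ι]
    {f : ι → ℝ} {i : ι} (hsum : ∑ j, f j = 0) (hoff : ∀ j, j ≠ i → f j ≤ 0) :
    ∑ j, |f j| = 2 * f i := by
  have hsplit := Finset.add_sum_erase Finset.univ f (Finset.mem_univ i)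
  have hsplit_abs := Finset.add_sum_erase Finset.univ (fun j => |f j|) (Finset.mem_univ i)
  have hoff_abs : ∑ j ∈ Finset.univ.erase i, |f j| = -∑ j ∈ Finset.univ.erase i, f j := by
    rw [← Finset.sum_neg_distrib]
    exact Finset.sum_congr rfl fun j hj => abs_of_nonpos (hoff j (Finset.ne_of_mem_erase hj))
  have hdiag : 0 ≤ f i := by
    have : ∑ j ∈ Finset.univ.erase i, f j ≤ 0 :=
      Finset.sum_nonpos fun j hj => hoff j (Finset.ne_of_mem_erase hj)
    linarith
  rw [← hsplit_abs, hoff_abs, abs_of_nonneg hdiag]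
  linarith

section mulVec

variable {d : ℕ} {p q : ℝ≥0∞} (A : Matrix (Fin d) (Fin d) ℝ) (x : Fin d → ℝ)

theorem abs_mulVec_apply_le (i : Fin d) : |(A *ᵥ x) i| ≤ ∑ j, |A i j| * |x j| := by
  simp only [Matrix.mulVec, dotProduct, ← abs_mul]
  exact Finset.abs_sum_le_sum_abs _ _

theorem abs_mulVec_apply_le_mul_pnormE (hp : 1 ≤ p) (i : Fin d) :
    |(A *ᵥ x) i| ≤ (∑ j, |A i j|) * pnormE p x := by
  rw [Finset.sum_mul]
  exact (abs_mulVec_apply_le A x i).trans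
    (Finset.sum_le_sum fun j _ => mul_le_mul_of_nonneg_left (abs_le_pnormE hp x j) (abs_nonneg _))

theorem pnormE_mulVec_le_sum_sum_abs_mul (hp : 1 ≤ p) (hq : 1 ≤ q) :
    pnormE q (A *ᵥ x) ≤ (∑ i, ∑ j, |A i j|) * pnormE p x := by
  rw [Finset.sum_mul]
  exact (pnormE_le_sum_abs hq _).trans
    (Finset.sum_le_sum fun i _ => abs_mulVec_apply_le_mul_pnormE A x hp i)

theorem pnormE_mulVec_le_pnormE_rowSums_mul (hp : 1 ≤ p) (hq : 1 ≤ q) :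
    pnormE q (A *ᵥ x) ≤ pnormE q (fun i => ∑ j, |A i j|) * pnormE p x := by
  calc pnormE q (A *ᵥ x) ≤ pnormE q (pnormE p x • fun i => ∑ j, |A i j|) := by
        refine pnormE_mono fun i => ?_
        rw [Pi.smul_apply, smul_eq_mul, mul_comm]
        exact (abs_mulVec_apply_le_mul_pnormE A x hp i).trans (le_abs_self _)
    _ = pnormE q (fun i => ∑ j, |A i j|) * pnormE p x := by
        rw [pnormE_smul hq, abs_of_nonneg (pnormE_nonneg hp x), mul_comm]

theorem pnormE_mulVec_le_sum_colSums_mul (hq : 1 ≤ q) :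
    pnormE q (A *ᵥ x) ≤ ∑ j, (∑ i, |A i j|) * |x j| := by
  calc pnormE q (A *ᵥ x) ≤ ∑ i, ∑ j, |A i j| * |x j| :=
        (pnormE_le_sum_abs hq _).trans (Finset.sum_le_sum fun i _ => abs_mulVec_apply_le A x i)
    _ = ∑ j, (∑ i, |A i j|) * |x j| := by
        rw [Finset.sum_comm]
        simp only [Finset.sum_mul]

theorem subNormE_le_of_forall {C : ℝ} (hp : 1 ≤ p) (hC : 0 ≤ C)
    (h : ∀ x, pnormE q (A *ᵥ x) ≤ C * pnormE p x) : subNormE p q A ≤ C := by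
  refine Real.sSup_le ?_ hC
  rintro r ⟨x, hx, rfl⟩
  rw [div_le_iff₀ (pnormE_pos hp hx)]
  exact h x

end mulVec

theorem sum_range_inv_succ_rpow_le {r : ℝ} (hr : 1 < r) (n : ℕ) :
    ∑ i ∈ Finset.range n, (((i : ℝ) + 1)⁻¹) ^ r ≤ r / (r - 1) := by
  have hr' : 0 < r - 1 := by linarith
  have hbound : r / (r - 1) = 1 + 1 / (r - 1) := by field_simp; ring
  cases n with
  | zero => simp only [Finset.range_zero, Finset.sum_empty]; positivity
  | succ n =>
    have hanti : AntitoneOn (fun x : ℝ => x ^ (-r)) (Set.Icc 1 (1 + n)) :=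
      (Real.antitoneOn_rpow_Ioi_of_exponent_nonpos (by linarith)).mono
        fun x hx => lt_of_lt_of_le one_pos hx.1
    have hintegral := hanti.sum_le_integral
    rw [integral_rpow (Or.inr ⟨by linarith, by simp⟩)] at hintegral
    have htail : ∑ i ∈ Finset.range n, (((↑(i + 1) : ℝ) + 1)⁻¹) ^ r ≤ 1 / (r - 1) := by
      refine le_trans (le_of_eq (Finset.sum_congr rfl fun i _ => ?_)) (hintegral.trans ?_)
      · rw [Real.inv_rpow (by positivity), ← Real.rpow_neg (by positivity)]
        push_cast; ring_nf
      · rw [show -r + 1 = -(r - 1) by ring, Real.one_rpow, div_neg, ← neg_div, neg_sub]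
        gcongr
        linarith [Real.rpow_nonneg (by positivity : (0 : ℝ) ≤ 1 + n) (-(r - 1))]
    rw [Finset.sum_range_succ', hbound]
    simp only [Nat.cast_zero, zero_add, inv_one, Real.one_rpow]
    linarith

section weights

variable {d : ℕ}

theorem rpow_sum_inv_succ_rpow_le {r : ℝ} (hr : 1 < r) :
    (∑ i : Fin d, (((i : ℕ) + 1 : ℝ)⁻¹) ^ r) ^ (1 / r) ≤ r / (r - 1) := by
  have hc : 1 ≤ r / (r - 1) := by rw [le_div_iff₀ (by linarith)]; linarith
  calc (∑ i : Fin d, (((i : ℕ) + 1 : ℝ)⁻¹) ^ r) ^ (1 / r) ≤ (r / (r - 1)) ^ (1 / r) := by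
        rw [Fin.sum_univ_eq_sum_range (fun i => (((i : ℝ) + 1)⁻¹) ^ r)]
        gcongr
        exact sum_range_inv_succ_rpow_le hr d
    _ ≤ r / (r - 1) := Real.rpow_le_self_of_one_le hc (by rw [div_le_one (by linarith)]; linarith)

theorem pnormE_inv_succ_le {q : ℝ≥0∞} (hq : 1 < q) :
    pnormE q (fun i : Fin d => ((i : ℕ) + 1 : ℝ)⁻¹) ≤ (qConj q).toReal := by
  unfold pnormE qConj
  split_ifs with hq_top
  · refine Real.iSup_le (fun i => ?_) zero_le_one
    rw [abs_of_pos (by positivity)]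
    exact inv_le_one_of_one_le₀ (by simp)
  · have hr : 1 < q.toReal := by
      simpa using (ENNReal.toReal_lt_toReal ENNReal.one_ne_top hq_top).mpr hq
    rw [ENNReal.toReal_div, ENNReal.toReal_sub_of_le hq.le hq_top, ENNReal.toReal_one]
    have habs : ∀ i : Fin d, |((i : ℕ) + 1 : ℝ)⁻¹| = ((i : ℕ) + 1 : ℝ)⁻¹ :=
      fun i => abs_of_pos (by positivity)
    simpa only [habs] using rpow_sum_inv_succ_rpow_le (d := d) hr

theorem sum_inv_succ_mul_abs_le {p : ℝ≥0∞} (hp : 1 ≤ p) (hp_top : p ≠ ∞) (x : Fin d → ℝ) :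
    ∑ j : Fin d, ((j : ℕ) + 1 : ℝ)⁻¹ * |x j| ≤ p.toReal * pnormE p x := by
  rw [pnormE, if_neg hp_top]
  rcases hp.eq_or_lt with rfl | hp_gt
  · simp only [ENNReal.toReal_one, Real.rpow_one, div_one, one_mul]
    exact Finset.sum_le_sum fun j _ =>
      mul_le_of_le_one_left (abs_nonneg _) (inv_le_one_of_one_le₀ (by simp))
  · have hs : 1 < p.toReal := by
      simpa using (ENNReal.toReal_lt_toReal ENNReal.one_ne_top hp_top).mpr hp_gt
    have hconj := (Real.HolderConjugate.conjExponent hs).symm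
    calc ∑ j : Fin d, ((j : ℕ) + 1 : ℝ)⁻¹ * |x j|
        ≤ (∑ j : Fin d, (((j : ℕ) + 1 : ℝ)⁻¹) ^ p.toReal.conjExponent) ^
              (1 / p.toReal.conjExponent) * (∑ j, |x j| ^ p.toReal) ^ (1 / p.toReal) :=
          Real.inner_le_Lp_mul_Lq_of_nonneg _ hconj (fun j _ => by positivity)
            (fun j _ => abs_nonneg _)
      _ ≤ p.toReal * (∑ j, |x j| ^ p.toReal) ^ (1 / p.toReal) := by
          gcongr
          exact (rpow_sum_inv_succ_rpow_le hconj.lt).trans_eq hconj.conjExponent_eq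

end weights

noncomputable def unifPrefix (n a : ℕ) : ℝ := if a < n then (n : ℝ)⁻¹ else 0

section SM

variable {k d : ℕ}

theorem SM_apply_of_le_left {i : Fin d} (hi : k ≤ i) (j : Fin d) : SM k d i j = 0 := by
  simp only [SM, Matrix.of_apply]
  rw [if_pos (Or.inl (by omega))]

theorem SM_apply_of_le_right {j : Fin d} (hj : k ≤ j) (i : Fin d) : SM k d i j = 0 := by
  simp only [SM, Matrix.of_apply]
  rw [if_pos (Or.inr (by omega))]

theorem SM_apply_of_lt_s18 {i j : Fin d} (hi : (i : ℕ) < k) (hj : (j : ℕ) < k) :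
    SM k d i j =
      unifPrefix (j + 1) i - unifPrefix j i - if (j : ℕ) = 0 then unifPrefix k i else 0 := by
  have hk : (k : ℝ) ≠ 0 := Nat.cast_ne_zero.mpr (by omega)
  simp only [SM, Matrix.of_apply, unifPrefix]
  split_ifs <;> first | omega | skip
  · rw [show (j : ℕ) = 0 by omega]
    field_simp
    ring
  · rw [show (i : ℕ) = j by assumption]
    push_cast
    ring
  · ring
  · have hj0 : ((j : ℕ) : ℝ) ≠ 0 := Nat.cast_ne_zero.mpr (by omega)
    push_cast
    rw [add_sub_cancel_right]
    field_simp
    ring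
  · ring

theorem SM_apply_nonpos {i j : Fin d} (hij : i ≠ j) : SM k d i j ≤ 0 := by
  have hij' : (i : ℕ) ≠ j := Fin.val_ne_of_ne hij
  simp only [SM, Matrix.of_apply]
  split_ifs <;> first | omega | rfl | skip
  · exact div_nonpos_of_nonpos_of_nonneg (by norm_num) (Nat.cast_nonneg k)
  · refine div_nonpos_of_nonpos_of_nonneg (by norm_num) ?_
    push_cast
    rw [add_sub_cancel_right]
    positivity

theorem SM_apply_self_le (i : Fin d) : SM k d i i ≤ ((i : ℕ) + 1 : ℝ)⁻¹ := by
  simp only [SM, Matrix.of_apply]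
  split_ifs
  · positivity
  · have hi0 : (i : ℕ) = 0 := by omega
    rw [hi0, Nat.cast_zero, zero_add, inv_one]
    have hk : (0 : ℝ) < k := Nat.cast_pos.mpr (by omega)
    rw [div_le_one₀ hk]
    linarith
  · rw [one_div]

end SM

theorem sum_fin_eq_sum_range_of_lt {M : Type*} [AddCommMonoid M] {k d : ℕ} (hkd : k ≤ d)
    {g : Fin d → M} {f : ℕ → M}
    (hfg : ∀ j : Fin d, (j : ℕ) < k → g j = f j) (hg : ∀ j : Fin d, k ≤ (j : ℕ) → g j = 0) :
    ∑ j, g j = ∑ n ∈ Finset.range k, f n := by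
  calc ∑ j, g j = ∑ j : Fin d, if (j : ℕ) < k then f j else 0 :=
        Finset.sum_congr rfl fun j _ => by
          split_ifs with h
          exacts [hfg j h, hg j (not_lt.mp h)]
    _ = ∑ n ∈ Finset.range d, if n < k then f n else 0 :=
        Fin.sum_univ_eq_sum_range (fun n => if n < k then f n else 0) d
    _ = ∑ n ∈ Finset.range k, f n := by
        rw [← Finset.sum_filter]
        congr 1
        ext n
        simp only [Finset.mem_filter, Finset.mem_range]
        omega

theorem sum_range_unifPrefix {n k : ℕ} (hn : 1 ≤ n) (hnk : n ≤ k) :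
    ∑ a ∈ Finset.range k, unifPrefix n a = 1 := by
  have hfilter : (Finset.range k).filter (· < n) = Finset.range n := by
    ext a
    simp only [Finset.mem_filter, Finset.mem_range]
    omega
  simp only [unifPrefix]
  rw [← Finset.sum_filter, hfilter, Finset.sum_const, Finset.card_range, nsmul_eq_mul,
    mul_inv_cancel₀ (Nat.cast_ne_zero.mpr (by omega))]

section SMsums

variable {k d : ℕ} (hkd : k ≤ d)
include hkd

theorem sum_SM_row (i : Fin d) : ∑ j, SM k d i j = 0 := by
  by_cases hi : k ≤ (i : ℕ)
  · simp [SM_apply_of_le_left hi]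
  rw [sum_fin_eq_sum_range_of_lt hkd
    (f := fun n => unifPrefix (n + 1) i - unifPrefix n i - if n = 0 then unifPrefix k i else 0)
    (fun j hj => SM_apply_of_lt_s18 (not_le.mp hi) hj)
    (fun j hj => SM_apply_of_le_right hj i), Finset.sum_sub_distrib,
    Finset.sum_range_sub (fun n => unifPrefix n i), Finset.sum_ite_eq' (Finset.range k) 0]
  simp [unifPrefix, (Nat.zero_le _).trans_lt (not_le.mp hi)]

theorem sum_SM_col (j : Fin d) : ∑ i, SM k d i j = 0 := by
  by_cases hj : k ≤ (j : ℕ)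
  · simp [SM_apply_of_le_right hj]
  rw [not_le] at hj
  rw [sum_fin_eq_sum_range_of_lt hkd
    (f := fun n =>
      unifPrefix (j + 1) n - unifPrefix j n - if (j : ℕ) = 0 then unifPrefix k n else 0)
    (fun i hi => SM_apply_of_lt_s18 hi hj)
    (fun i hi => SM_apply_of_le_left hi j), Finset.sum_sub_distrib, Finset.sum_sub_distrib,
    sum_range_unifPrefix (by omega) hj]
  rcases Nat.eq_zero_or_pos (j : ℕ) with hj0 | hj0
  · have hu0 : ∀ n, unifPrefix 0 n = 0 := fun n => if_neg (Nat.not_lt_zero n)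
    simp only [hj0, hu0, if_true, Finset.sum_const_zero,
      sum_range_unifPrefix (n := k) (by omega) le_rfl]
    norm_num
  · simp [hj0.ne', sum_range_unifPrefix hj0 hj.le]

end SMsums

section SMbounds

variable {k d : ℕ} (hkd : k ≤ d)
include hkd

theorem sum_abs_SM_row (i : Fin d) : ∑ j, |SM k d i j| = 2 * SM k d i i :=
  sum_abs_eq_two_mul_of_sum_eq_zero (sum_SM_row hkd i) fun _ hj => SM_apply_nonpos hj.symm

theorem sum_abs_SM_col (j : Fin d) : ∑ i, |SM k d i j| = 2 * SM k d j j :=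
  sum_abs_eq_two_mul_of_sum_eq_zero (sum_SM_col hkd j) fun _ hi => SM_apply_nonpos hi

theorem SM_apply_self_nonneg (i : Fin d) : 0 ≤ SM k d i i := by
  have hrow := sum_abs_SM_row hkd i
  have hsum : 0 ≤ ∑ j, |SM k d i j| := Finset.sum_nonneg fun j _ => abs_nonneg _
  linarith

theorem sum_SM_apply_self_le_harmonic : ∑ i, SM k d i i ≤ harmonic k := by
  calc ∑ i, SM k d i i ≤ ∑ i : Fin d, if (i : ℕ) < k then ((i : ℕ) + 1 : ℝ)⁻¹ else 0 :=
        Finset.sum_le_sum fun i _ => by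
          split_ifs with hi
          exacts [SM_apply_self_le i, (SM_apply_of_le_left (not_lt.mp hi) i).le]
    _ = ∑ n ∈ Finset.range k, ((n : ℝ) + 1)⁻¹ :=
        sum_fin_eq_sum_range_of_lt hkd (fun i hi => if_pos hi) fun i hi => if_neg (not_lt.mpr hi)
    _ = harmonic k := by simp [harmonic]

theorem subNormE_SM_le_log {p q : ℝ≥0∞} (hp : 1 ≤ p) (hq : 1 ≤ q) :
    subNormE p q (SM k d) ≤ 2 * (1 + Real.log k) := by
  have hlog : 0 ≤ Real.log k := Real.log_natCast_nonneg k
  refine subNormE_le_of_forall _ hp (by positivity) fun x => ?_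
  refine (pnormE_mulVec_le_sum_sum_abs_mul _ x hp hq).trans (mul_le_mul_of_nonneg_right ?_
    (pnormE_nonneg hp x))
  simp only [sum_abs_SM_row hkd, ← Finset.mul_sum]
  gcongr
  exact (sum_SM_apply_self_le_harmonic hkd).trans (harmonic_le_one_add_log k)

theorem subNormE_SM_le_of_ne_top {p q : ℝ≥0∞} (hp : 1 ≤ p) (hq : 1 ≤ q) (hp_top : p ≠ ∞) :
    subNormE p q (SM k d) ≤ 2 * p.toReal := by
  refine subNormE_le_of_forall _ hp (by positivity) fun x => ?_
  calc pnormE q (SM k d *ᵥ x) ≤ ∑ j, (∑ i, |SM k d i j|) * |x j| :=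
        pnormE_mulVec_le_sum_colSums_mul _ x hq
    _ ≤ 2 * ∑ j : Fin d, ((j : ℕ) + 1 : ℝ)⁻¹ * |x j| := by
        simp only [sum_abs_SM_col hkd, Finset.mul_sum, mul_assoc]
        gcongr with j
        exact SM_apply_self_le j
    _ ≤ 2 * p.toReal * pnormE p x := by
        rw [mul_assoc]
        gcongr
        exact sum_inv_succ_mul_abs_le hp hp_top x

theorem subNormE_SM_le_qConj {p q : ℝ≥0∞} (hp : 1 ≤ p) (hq : 1 < q) :
    subNormE p q (SM k d) ≤ 2 * (qConj q).toReal := by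
  refine subNormE_le_of_forall _ hp (by positivity) fun x => ?_
  refine (pnormE_mulVec_le_pnormE_rowSums_mul _ x hp hq.le).trans
    (mul_le_mul_of_nonneg_right ?_ (pnormE_nonneg hp x))
  calc pnormE q (fun i => ∑ j, |SM k d i j|)
      ≤ pnormE q ((2 : ℝ) • fun i : Fin d => ((i : ℕ) + 1 : ℝ)⁻¹) := by
        refine pnormE_mono fun i => ?_
        rw [sum_abs_SM_row hkd, Pi.smul_apply, smul_eq_mul,
          abs_of_nonneg (by linarith [SM_apply_self_nonneg hkd i]),
          abs_of_nonneg (by positivity)]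
        gcongr
        exact SM_apply_self_le i
    _ ≤ 2 * (qConj q).toReal := by
        rw [pnormE_smul hq.le, abs_two]
        gcongr
        exact pnormE_inv_succ_le hq

end SMbounds

theorem qConj_one : qConj 1 = ∞ := by
  simp [qConj]

theorem le_toReal_min {S : ℝ} {a b : ℝ≥0∞} (ha : a ≠ ∞ → S ≤ a.toReal)
    (hb : b ≠ ∞ → S ≤ b.toReal) : min a b ≠ ∞ → S ≤ (min a b).toReal := by
  rcases min_choice a b with h | h <;> rw [h] <;> assumption

theorem SM_subNorm_bound_general (d k : ℕ) (hkd : k ≤ d)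
    (p q : ℝ≥0∞) (hp : 1 ≤ p) (hq : 1 ≤ q) :
    subNormE p q (SM k d) ≤
      2 * (min (min (p + 1) (qConj q)) (ENNReal.ofReal (1 + Real.log k))).toReal := by
  have hlog : 0 ≤ Real.log k := Real.log_natCast_nonneg k
  rw [← div_le_iff₀' two_pos]
  refine le_toReal_min (le_toReal_min (fun hp1_top => ?_) (fun hq_top => ?_)) (fun _ => ?_)
    (ne_top_of_le_ne_top ENNReal.ofReal_ne_top (min_le_right _ _))
  · have hp_top : p ≠ ∞ := (ENNReal.add_ne_top.mp hp1_top).1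
    have := subNormE_SM_le_of_ne_top hkd hp hq hp_top (q := q)
    rw [ENNReal.toReal_add hp_top ENNReal.one_ne_top, ENNReal.toReal_one]
    linarith
  · have hq_gt : 1 < q := hq.lt_of_ne fun h => hq_top (h ▸ qConj_one)
    have := subNormE_SM_le_qConj hkd hp hq_gt
    linarith
  · have := subNormE_SM_le_log hkd hp hq
    rw [ENNReal.toReal_ofReal (by positivity)]
    linarith

/-- `‖SM_{(k,d)}‖_{p,q} ≤ 2·min{p + 1, q/(q−1), 1 + log k}` for all `p, q ∈ [1, ∞]`. -/
theorem SM_subNorm_bound (d k : ℕ) (hk1 : 1 ≤ k) (hkd : k ≤ d)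
    (p q : ℝ≥0∞) (hp : 1 ≤ p) (hq : 1 ≤ q) :
    subNormE p q (SM k d) ≤
      2 * (min (min (p + 1) (qConj q)) (ENNReal.ofReal (1 + Real.log k))).toReal :=
  SM_subNorm_bound_general d k hkd p q hp hq
end
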